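/- For n = 2 the factorial Grothendieck polynomial satisfies G_{λ₁,λ₂}(x|⊖t) = ((1 + βt_{λ₂+1})/(1 + βt₁)) · (F_{λ₁,λ₂} + β·F_{λ₁,λ₂+1}), where F_μ(x|⊖t) = det[(x_j|⊖t)^{2+μ_i-i}]/det[(x_j|⊖t)^{2-i}], (x|⊖t)^r = ∏_{i=1}^{r}(x ⊖ t_i), and x ⊖ t = (x - t)/(1 + βt). -/

import Mathlib

open Finset

/-- Formal subtraction `a ⊖ b = (a - b)/(1 + β b)`. -/
noncomputable def omin10 {K : Type*} [Field K] (β a b : K) : K := (a - b) / (1 + β * b)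

/-- Factorial power built from `⊖t`: `(z|⊖t)^m = ∏_{i=1}^m (z ⊖ t_i)`,
with `t i` (0-based) denoting `t_{i+1}`. -/
noncomputable def facPowOm10 {K : Type*} [Field K] (β : K) (t : ℕ → K) (z : K) (m : ℕ) : K :=
  ∏ j ∈ Finset.range m, omin10 β z (t j)

/-- `F_{μ₁,μ₂}(x|⊖t) = det[(x_j|⊖t)^{2+μ_i-i}] / det[(x_j|⊖t)^{2-i}]` for `n = 2`. -/
noncomputable def F10 {K : Type*} [Field K] (β : K) (t : ℕ → K) (x₁ x₂ : K)
    (μ₁ μ₂ : ℕ) : K :=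
  (facPowOm10 β t x₁ (μ₁ + 1) * facPowOm10 β t x₂ μ₂
      - facPowOm10 β t x₂ (μ₁ + 1) * facPowOm10 β t x₁ μ₂)
    / (facPowOm10 β t x₁ 1 * 1 - facPowOm10 β t x₂ 1 * 1)

/-- The factorial Grothendieck polynomial for `n = 2` via the Ikeda–Naruse
determinant formula with factorial powers built from `⊖t`:
`G_{λ₁,λ₂}(x|⊖t) = det[(x_j|⊖t)^{λ_i+2-i}(1+βx_j)^{i-1}] / det[x_j^{2-i}]`. -/
noncomputable def G10 {K : Type*} [Field K] (β : K) (t : ℕ → K) (x₁ x₂ : K)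
    (lam₁ lam₂ : ℕ) : K :=
  (facPowOm10 β t x₁ (lam₁ + 1) * (facPowOm10 β t x₂ lam₂ * (1 + β * x₂))
      - facPowOm10 β t x₂ (lam₁ + 1) * (facPowOm10 β t x₁ lam₂ * (1 + β * x₁)))
    / (x₁ - x₂)

/-- For `n = 2`:
`G_{λ₁,λ₂}(x|⊖t) = ((1+βt_{λ₂+1})/(1+βt₁)) (F_{λ₁,λ₂} + β F_{λ₁,λ₂+1})`. -/
theorem factorial_grothendieck_F_expansion_n2 {K : Type*} [Field K] (β : K)
    (t : ℕ → K) (x₁ x₂ : K) (lam₁ lam₂ : ℕ) (hlam : lam₂ ≤ lam₁)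
    (hx : x₁ ≠ x₂) (ht : ∀ j, 1 + β * t j ≠ 0) :
    G10 β t x₁ x₂ lam₁ lam₂
      = ((1 + β * t lam₂) / (1 + β * t 0))
          * (F10 β t x₁ x₂ lam₁ lam₂ + β * F10 β t x₁ x₂ lam₁ (lam₂ + 1)) := by
  have h0 := ht 0
  have hT := ht lam₂
  have hx' : x₁ - x₂ ≠ 0 := sub_ne_zero.mpr hx
  have e1 : facPowOm10 β t x₁ 1 = (x₁ - t 0) / (1 + β * t 0) := by
    simp [facPowOm10, omin10]
  have e2 : facPowOm10 β t x₂ 1 = (x₂ - t 0) / (1 + β * t 0) := by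
    simp [facPowOm10, omin10]
  have e3 : facPowOm10 β t x₁ (lam₂ + 1)
      = facPowOm10 β t x₁ lam₂ * ((x₁ - t lam₂) / (1 + β * t lam₂)) := by
    rw [facPowOm10, prod_range_succ]; rfl
  have e4 : facPowOm10 β t x₂ (lam₂ + 1)
      = facPowOm10 β t x₂ lam₂ * ((x₂ - t lam₂) / (1 + β * t lam₂)) := by
    rw [facPowOm10, prod_range_succ]; rfl
  unfold G10 F10
  rw [e1, e2, e3, e4]
  have hΔ : (x₁ - t 0) / (1 + β * t 0) * 1 - (x₂ - t 0) / (1 + β * t 0) * 1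
      = (x₁ - x₂) / (1 + β * t 0) := by field_simp; ring
  rw [hΔ]
  field_simp
  ring
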